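/- arXiv:2007.12456 — 2 statements merged into one kernel-verified Lean document; each statement's English description precedes it below -/
import Mathlib

section
/- Let H be a real Hilbert space and E : H → [0,∞] a symmetric, convex, lower semicontinuous functional. Then the energy space 𝔇 equipped with ‖·‖_𝔇 is complete: every sequence (xₙ) in 𝔇 that is Cauchy with respect to ‖·‖_𝔇 converges in the norm ‖·‖_𝔇 to some element x ∈ 𝔇. -/
open scoped ENNReal

noncomputable section

variable {H : Type*} [NormedAddCommGroup H] [InnerProductSpace ℝ H] [CompleteSpace H]

/-- Convexity for an `ℝ≥0∞`-valued functional on a real Hilbert space. -/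
def IsConvexFunctional (E : H → ℝ≥0∞) : Prop :=
  ∀ x y : H, ∀ a b : ℝ, 0 ≤ a → 0 ≤ b → a + b = 1 →
    E (a • x + b • y) ≤ ENNReal.ofReal a * E x + ENNReal.ofReal b * E y

/-- `E` is symmetric: `E 0 = 0` and `E (-x) = E x`. -/
def IsSymmetricFunctional (E : H → ℝ≥0∞) : Prop :=
  E 0 = 0 ∧ ∀ x : H, E (-x) = E x

/-- `E₁ x = ‖x‖² + E x`. -/
def EOne (E : H → ℝ≥0∞) (x : H) : ℝ≥0∞ :=
  ENNReal.ofReal (‖x‖ ^ 2) + E x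

/-- The Luxemburg-type norm `‖x‖_𝔇 = inf {λ > 0 | E₁(x/λ) ≤ 1}`, with `inf ∅ = ∞`. -/
def Dnorm (E : H → ℝ≥0∞) (x : H) : ℝ≥0∞ :=
  sInf (ENNReal.ofReal '' {l : ℝ | 0 < l ∧ EOne E (l⁻¹ • x) ≤ 1})

/-- The energy space `𝔇 = {x ∈ H | ‖x‖_𝔇 < ∞}`. -/
def Dspace (E : H → ℝ≥0∞) : Set H :=
  {x : H | Dnorm E x < ⊤}

/-! Since `‖z‖ ≤ ‖z‖_𝔇`, a `‖·‖_𝔇`-Cauchy sequence converges in `H` to some `y`. Convexity and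
`E 0 = 0` make the set of admissible `λ` (those with `E₁ (λ⁻¹ • z) ≤ 1`) upward closed, so
`‖z‖_𝔇 < λ` forces `E₁ (λ⁻¹ • z) ≤ 1`, and by lower semicontinuity of `E₁` this condition survives
limits in `H`. Hence `‖xₙ - xₖ‖_𝔇 < λ` for all large `k` gives `‖xₙ - y‖_𝔇 ≤ λ` and
`‖y - xₙ‖_𝔇 ≤ λ`; the latter puts `y` in `𝔇` by the triangle inequality. -/

lemma lowerSemicontinuous_EOne {V : Type*} [NormedAddCommGroup V] {E : V → ℝ≥0∞}
    (hlsc : LowerSemicontinuous E) : LowerSemicontinuous (EOne E) :=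
  (ENNReal.continuous_ofReal.comp (continuous_norm.pow 2)).lowerSemicontinuous.add hlsc

section

variable {V : Type*} [NormedAddCommGroup V] [InnerProductSpace ℝ V] {E : V → ℝ≥0∞}

lemma EOne_smul_add_smul_le (hconv : IsConvexFunctional E) (u v : V) {a b : ℝ}
    (ha : 0 ≤ a) (hb : 0 ≤ b) (hab : a + b = 1) :
    EOne E (a • u + b • v) ≤ ENNReal.ofReal a * EOne E u + ENNReal.ofReal b * EOne E v := by
  have hnorm : ‖a • u + b • v‖ ^ 2 ≤ a * ‖u‖ ^ 2 + b * ‖v‖ ^ 2 := by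
    have htri : ‖a • u + b • v‖ ≤ a * ‖u‖ + b * ‖v‖ := by
      simpa [norm_smul, abs_of_nonneg ha, abs_of_nonneg hb] using norm_add_le (a • u) (b • v)
    have hsq := pow_le_pow_left₀ (norm_nonneg _) htri 2
    nlinarith [sq_nonneg (‖u‖ - ‖v‖), mul_nonneg ha hb]
  calc EOne E (a • u + b • v)
      ≤ ENNReal.ofReal (a * ‖u‖ ^ 2 + b * ‖v‖ ^ 2)
        + (ENNReal.ofReal a * E u + ENNReal.ofReal b * E v) :=
        add_le_add (ENNReal.ofReal_le_ofReal hnorm) (hconv u v a b ha hb hab)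
    _ = ENNReal.ofReal a * EOne E u + ENNReal.ofReal b * EOne E v := by
        rw [EOne, EOne, ENNReal.ofReal_add (by positivity) (by positivity),
          ENNReal.ofReal_mul ha, ENNReal.ofReal_mul hb]
        ring

lemma EOne_inv_smul_le_one_of_le (hconv : IsConvexFunctional E) (h0 : E 0 = 0) {z : V}
    {l l' : ℝ} (hl : 0 < l) (hll' : l ≤ l') (h : EOne E (l⁻¹ • z) ≤ 1) :
    EOne E (l'⁻¹ • z) ≤ 1 := by
  have hl' : 0 < l' := hl.trans_le hll'
  have hcomb : l'⁻¹ • z = (l / l') • (l⁻¹ • z) + (1 - l / l') • (0 : V) := by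
    rw [smul_zero, add_zero, smul_smul]
    congr 1
    field_simp
  rw [hcomb]
  calc EOne E _ ≤ ENNReal.ofReal (l / l') * EOne E (l⁻¹ • z)
        + ENNReal.ofReal (1 - l / l') * EOne E 0 :=
      EOne_smul_add_smul_le hconv _ _ (by positivity)
        (sub_nonneg.2 ((div_le_one hl').2 hll')) (add_sub_cancel _ _)
    _ ≤ ENNReal.ofReal (l / l') * 1 + ENNReal.ofReal (1 - l / l') * 0 := by
        gcongr
        simp [EOne, h0]
    _ ≤ 1 := by
        rw [mul_one, mul_zero, add_zero]
        exact ENNReal.ofReal_le_one.2 ((div_le_one hl').2 hll')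

lemma EOne_inv_smul_add_le_one (hconv : IsConvexFunctional E) {u v : V} {a b : ℝ}
    (ha : 0 < a) (hb : 0 < b) (hu : EOne E (a⁻¹ • u) ≤ 1) (hv : EOne E (b⁻¹ • v) ≤ 1) :
    EOne E ((a + b)⁻¹ • (u + v)) ≤ 1 := by
  have hab : 0 < a + b := add_pos ha hb
  have hcomb : (a + b)⁻¹ • (u + v) = (a / (a + b)) • (a⁻¹ • u) + (b / (a + b)) • (b⁻¹ • v) := by
    rw [smul_smul, smul_smul, smul_add]
    congr 2 <;> field_simp
  rw [hcomb]
  calc EOne E _ ≤ ENNReal.ofReal (a / (a + b)) * EOne E (a⁻¹ • u)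
        + ENNReal.ofReal (b / (a + b)) * EOne E (b⁻¹ • v) :=
      EOne_smul_add_smul_le hconv _ _ (by positivity) (by positivity) (by field_simp)
    _ ≤ ENNReal.ofReal (a / (a + b)) * 1 + ENNReal.ofReal (b / (a + b)) * 1 := by gcongr
    _ = 1 := by
        rw [mul_one, mul_one, ← ENNReal.ofReal_add (by positivity) (by positivity), ← add_div,
          div_self hab.ne', ENNReal.ofReal_one]

lemma Dnorm_le_ofReal {z : V} {l : ℝ} (hl : 0 < l) (h : EOne E (l⁻¹ • z) ≤ 1) :
    Dnorm E z ≤ ENNReal.ofReal l :=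
  sInf_le ⟨l, ⟨hl, h⟩, rfl⟩

lemma EOne_inv_smul_le_one_of_Dnorm_lt (hconv : IsConvexFunctional E) (h0 : E 0 = 0) {z : V}
    {l : ℝ} (hl : 0 < l) (h : Dnorm E z < ENNReal.ofReal l) : EOne E (l⁻¹ • z) ≤ 1 := by
  obtain ⟨_, ⟨l', ⟨hl', hadm⟩, rfl⟩, hlt⟩ := sInf_lt_iff.1 h
  exact EOne_inv_smul_le_one_of_le hconv h0 hl' ((ENNReal.ofReal_lt_ofReal_iff hl).1 hlt).le hadm

lemma exists_lt_Dnorm_lt_add {z : V} (hz : Dnorm E z ≠ ⊤) {ε : ℝ≥0∞} (hε : ε ≠ 0) :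
    ∃ l : ℝ, 0 < l ∧ Dnorm E z < ENNReal.ofReal l ∧ ENNReal.ofReal l ≤ Dnorm E z + ε := by
  obtain ⟨l, -, hzl, hlε⟩ := ENNReal.lt_iff_exists_real_btwn.1 (ENNReal.lt_add_right hz hε)
  exact ⟨l, ENNReal.ofReal_pos.1 (zero_le.trans_lt hzl), hzl, hlε.le⟩

lemma Dnorm_add_le (hconv : IsConvexFunctional E) (h0 : E 0 = 0) (u v : V) :
    Dnorm E (u + v) ≤ Dnorm E u + Dnorm E v := by
  refine ENNReal.le_of_forall_pos_le_add fun ε hε hfin => ?_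
  have hε2 : (ε : ℝ≥0∞) / 2 ≠ 0 := (ENNReal.half_pos (by exact_mod_cast hε.ne')).ne'
  obtain ⟨hu, hv⟩ := ENNReal.add_lt_top.1 hfin
  obtain ⟨a, ha, hua, haε⟩ := exists_lt_Dnorm_lt_add hu.ne hε2
  obtain ⟨b, hb, hvb, hbε⟩ := exists_lt_Dnorm_lt_add hv.ne hε2
  calc Dnorm E (u + v) ≤ ENNReal.ofReal (a + b) :=
        Dnorm_le_ofReal (add_pos ha hb) (EOne_inv_smul_add_le_one hconv ha hb
          (EOne_inv_smul_le_one_of_Dnorm_lt hconv h0 ha hua)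
          (EOne_inv_smul_le_one_of_Dnorm_lt hconv h0 hb hvb))
    _ = ENNReal.ofReal a + ENNReal.ofReal b := ENNReal.ofReal_add ha.le hb.le
    _ ≤ Dnorm E u + ε / 2 + (Dnorm E v + ε / 2) := add_le_add haε hbε
    _ = Dnorm E u + Dnorm E v + ε := by rw [add_add_add_comm, ENNReal.add_halves]

lemma norm_le_of_EOne_inv_smul_le_one {z : V} {l : ℝ} (hl : 0 < l)
    (h : EOne E (l⁻¹ • z) ≤ 1) : ‖z‖ ≤ l := by
  have hsq : ‖l⁻¹ • z‖ ^ 2 ≤ 1 := ENNReal.ofReal_le_one.1 ((le_self_add).trans h)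
  have hle : ‖l⁻¹ • z‖ ≤ 1 := (pow_le_one_iff_of_nonneg (norm_nonneg _) two_ne_zero).1 hsq
  rwa [norm_smul, norm_inv, Real.norm_of_nonneg hl.le, inv_mul_le_iff₀ hl, mul_one] at hle

lemma ofReal_norm_le_Dnorm (z : V) : ENNReal.ofReal ‖z‖ ≤ Dnorm E z :=
  le_sInf <| by
    rintro _ ⟨l, ⟨hl, h⟩, rfl⟩
    exact ENNReal.ofReal_le_ofReal (norm_le_of_EOne_inv_smul_le_one hl h)

lemma Dnorm_le_of_tendsto (hconv : IsConvexFunctional E) (h0 : E 0 = 0)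
    (hlsc : LowerSemicontinuous E) {ι : Type*} {p : Filter ι} [p.NeBot] {z : ι → V} {w : V}
    (hz : Filter.Tendsto z p (nhds w)) {l : ℝ} (hl : 0 < l)
    (h : ∀ᶠ i in p, Dnorm E (z i) < ENNReal.ofReal l) : Dnorm E w ≤ ENNReal.ofReal l :=
  Dnorm_le_ofReal hl <|
    ((lowerSemicontinuous_EOne hlsc).isClosed_preimage 1).mem_of_tendsto (hz.const_smul l⁻¹)
      (h.mono fun _ hi => EOne_inv_smul_le_one_of_Dnorm_lt hconv h0 hl hi)

end

/-- `(𝔇, ‖·‖_𝔇)` is complete: every `‖·‖_𝔇`-Cauchy sequence in `𝔇` converges in `‖·‖_𝔇`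
to an element of `𝔇`. -/
theorem Dspace_complete (E : H → ℝ≥0∞) (hconv : IsConvexFunctional E)
    (hlsc : LowerSemicontinuous E) (hsym : IsSymmetricFunctional E)
    (x : ℕ → H) (hx : ∀ n, x n ∈ Dspace E)
    (hcauchy : ∀ ε : ℝ≥0∞, 0 < ε → ∃ N : ℕ, ∀ n ≥ N, ∀ k ≥ N, Dnorm E (x n - x k) < ε) :
    ∃ y ∈ Dspace E, Filter.Tendsto (fun n => Dnorm E (x n - y)) Filter.atTop (nhds 0) := by
  have h0 : E 0 = 0 := hsym.1
  have hCau : CauchySeq x := Metric.cauchySeq_iff.2 fun ε hε => by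
    obtain ⟨N, hN⟩ := hcauchy _ (ENNReal.ofReal_pos.2 hε)
    refine ⟨N, fun m hm n hn => ?_⟩
    rw [dist_eq_norm, ← ENNReal.ofReal_lt_ofReal_iff hε]
    exact (ofReal_norm_le_Dnorm _).trans_lt (hN m hm n hn)
  obtain ⟨y, hy⟩ := cauchySeq_tendsto_of_complete hCau
  have hlim : ∀ δ : ℝ, 0 < δ → ∃ N, ∀ n ≥ N,
      Dnorm E (x n - y) ≤ ENNReal.ofReal δ ∧ Dnorm E (y - x n) ≤ ENNReal.ofReal δ := by
    intro δ hδ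
    obtain ⟨N, hN⟩ := hcauchy _ (ENNReal.ofReal_pos.2 hδ)
    refine ⟨N, fun n hn => ⟨?_, ?_⟩⟩
    · exact Dnorm_le_of_tendsto hconv h0 hlsc (hy.const_sub (x n)) hδ
        ((Filter.eventually_ge_atTop N).mono fun k hk => hN n hn k hk)
    · exact Dnorm_le_of_tendsto hconv h0 hlsc (hy.sub_const (x n)) hδ
        ((Filter.eventually_ge_atTop N).mono fun k hk => hN k hk n hn)
  refine ⟨y, ?_, ENNReal.tendsto_nhds_zero.2 fun ε hε => ?_⟩
  · obtain ⟨N, hN⟩ := hlim 1 one_pos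
    calc Dnorm E y = Dnorm E (x N + (y - x N)) := by rw [add_sub_cancel]
      _ ≤ Dnorm E (x N) + Dnorm E (y - x N) := Dnorm_add_le hconv h0 _ _
      _ < ⊤ := ENNReal.add_lt_top.2 ⟨hx N, (hN N le_rfl).2.trans_lt ENNReal.ofReal_lt_top⟩
  · obtain ⟨δ, -, hδ, hδε⟩ := ENNReal.lt_iff_exists_real_btwn.1 hε
    obtain ⟨N, hN⟩ := hlim δ (ENNReal.ofReal_pos.1 hδ)
    filter_upwards [Filter.eventually_ge_atTop N] with n hn
    exact (hN n hn).1.trans hδε.le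

end
end

section
/- Let H be a real Hilbert space and E : H → [0,∞] a convex, lower semicontinuous functional with E(0) = 0. Then the linear span of dom(E) equals the linear span of dom(sym E); moreover, every f ∈ dom(sym E) can be written as f = u − v with u, v ∈ dom(E). -/
open scoped ENNReal

noncomputable section

variable {H : Type*} [NormedAddCommGroup H] [InnerProductSpace ℝ H] [CompleteSpace H]

/-- The symmetric closure `sym E` of `E`: the supremum of all lower semicontinuous convex
functionals `F` with `F ≤ E₁(·)` and `F ≤ E₁(-·)`. -/
def symE (E : H → ℝ≥0∞) (u : H) : ℝ≥0∞ :=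
  sSup {t : ℝ≥0∞ | ∃ F : H → ℝ≥0∞, LowerSemicontinuous F ∧ IsConvexFunctional F ∧
    (∀ x : H, F x ≤ EOne E x) ∧ (∀ x : H, F x ≤ EOne E (-x)) ∧ t = F u}

end

/-! The functional `splitLevel E x = ⨅ u, max (E₁ u) (E₁ (u - x))` measures how cheaply `x`
splits as `u - v`. It is convex, and since `E₁ 0 = 0` it lies below both `E₁` and `E₁ (-·)`. Its
sublevel sets are intersections of differences `{E₁ ≤ c} - {E₁ ≤ c}` of bounded closed convex sets;
these are weakly compact (Banach–Alaoglu, transported by the Riesz map), so the differences are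
weakly compact, hence weakly closed and a fortiori closed, and `splitLevel E` is lower
semicontinuous. Therefore `splitLevel E ≤ sym E`, and `sym E f < ∞` produces `f = u - v` with
`E u, E v < ∞`. -/

open Set
open scoped Pointwise

theorem mem_preimage_Iic_sub_preimage_Iic_iff {α β : Type*} [AddCommGroup α] [LinearOrder β]
    {f : α → β} {x : α} {c : β} :
    x ∈ f ⁻¹' Iic c - f ⁻¹' Iic c ↔ ∃ u, max (f u) (f (u - x)) ≤ c := by
  simp only [mem_sub, mem_preimage, mem_Iic, max_le_iff]
  constructor
  · rintro ⟨u, hu, v, hv, rfl⟩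
    exact ⟨u, hu, by rwa [sub_sub_cancel]⟩
  · rintro ⟨u, hu, hv⟩
    exact ⟨u, hu, u - x, hv, sub_sub_cancel u x⟩

namespace InnerProductSpace

open NormedSpace
open scoped RealInnerProductSpace

variable {H : Type*} [NormedAddCommGroup H] [InnerProductSpace ℝ H] [CompleteSpace H]

variable (H) in
@[simps]
noncomputable def weakSpaceHomeomorphWeakDual : WeakSpace ℝ H ≃ₜ WeakDual ℝ H where
  toFun x := StrongDual.toWeakDual (toDual ℝ H ((toWeakSpace ℝ H).symm x))
  invFun ℓ := toWeakSpace ℝ H ((toDual ℝ H).symm (WeakDual.toStrongDual ℓ))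
  left_inv x := by simp
  right_inv ℓ := by simp
  continuous_toFun := WeakDual.continuous_of_continuous_eval fun y =>
    (WeakBilin.eval_continuous (topDualPairing ℝ H).flip (toDual ℝ H y)).congr fun x =>
      real_inner_comm _ _
  continuous_invFun := WeakBilin.continuous_of_continuous_eval _ fun g => by
    refine (WeakDual.eval_continuous ((toDual ℝ H).symm g)).congr fun ℓ => ?_
    show WeakDual.toStrongDual ℓ ((toDual ℝ H).symm g) =
      g ((toDual ℝ H).symm (WeakDual.toStrongDual ℓ))
    rw [← toDual_symm_apply, ← toDual_symm_apply (y := g), real_inner_comm]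

theorem isCompact_toWeakSpace_image {A : Set H} (hconv : Convex ℝ A) (hclosed : IsClosed A)
    (hbdd : Bornology.IsBounded A) : IsCompact (toWeakSpace ℝ H '' A) := by
  have hweak : IsClosed (toWeakSpace ℝ H '' A) := by
    rw [← hclosed.closure_eq, hconv.toWeakSpace_closure ℝ]
    exact isClosed_closure
  rw [← (weakSpaceHomeomorphWeakDual H).isCompact_image]
  refine WeakDual.isCompact_of_bounded_of_closed ?_
    ((weakSpaceHomeomorphWeakDual H).isClosedMap _ hweak)
  rw [← WeakDual.isBounded_toWeakDual_preimage_iff_isBounded]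
  convert (toDual ℝ H).lipschitz.isBounded_image hbdd
  ext f
  simp

theorem _root_.Convex.isClosed_sub {A B : Set H} (hAc : Convex ℝ A) (hAcl : IsClosed A)
    (hAb : Bornology.IsBounded A) (hBc : Convex ℝ B) (hBcl : IsClosed B)
    (hBb : Bornology.IsBounded B) : IsClosed (A - B) := by
  have hcpt : IsCompact (toWeakSpace ℝ H '' (A - B)) := by
    rw [Set.image_sub, sub_eq_add_neg]
    exact (isCompact_toWeakSpace_image hAc hAcl hAb).add
      (isCompact_toWeakSpace_image hBc hBcl hBb).neg
  convert hcpt.isClosed.preimage (toWeakSpaceCLM ℝ H).continuous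
  exact (Function.Injective.preimage_image (fun _ _ h => h) _).symm

end InnerProductSpace

section

variable {H : Type*} [NormedAddCommGroup H] {E : H → ℝ≥0∞}

theorem LowerSemicontinuous.eOne (hlsc : LowerSemicontinuous E) :
    LowerSemicontinuous (EOne E) :=
  (ENNReal.continuous_ofReal.comp (continuous_norm.pow 2)).lowerSemicontinuous.add hlsc

theorem eOne_zero (hzero : E 0 = 0) : EOne E 0 = 0 := by
  simp [EOne, hzero]

theorem eOne_lt_top_iff {x : H} : EOne E x < ⊤ ↔ E x < ⊤ := by
  simp [EOne, ENNReal.add_lt_top]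

theorem isBounded_eOne_preimage_Iic {c : ℝ≥0∞} (hc : c ≠ ⊤) :
    Bornology.IsBounded (EOne E ⁻¹' Iic c) := by
  refine isBounded_iff_forall_norm_le.2 ⟨√c.toReal, fun x hx => ?_⟩
  have hsq : ENNReal.ofReal (‖x‖ ^ 2) ≤ c := le_trans le_self_add hx
  exact Real.le_sqrt_of_sq_le ((ENNReal.ofReal_le_iff_le_toReal hc).1 hsq)

variable (E) in
noncomputable def splitLevel (x : H) : ℝ≥0∞ :=
  ⨅ u : H, max (EOne E u) (EOne E (u - x))

theorem splitLevel_le_eOne (hzero : E 0 = 0) (x : H) : splitLevel E x ≤ EOne E x :=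
  iInf_le_of_le x (by simp [eOne_zero hzero])

theorem splitLevel_le_eOne_neg (hzero : E 0 = 0) (x : H) : splitLevel E x ≤ EOne E (-x) :=
  iInf_le_of_le 0 (by simp [eOne_zero hzero])

theorem exists_sub_of_splitLevel_lt_top {x : H} (hx : splitLevel E x < ⊤) :
    ∃ u v : H, E u < ⊤ ∧ E v < ⊤ ∧ x = u - v := by
  obtain ⟨u, hu⟩ := iInf_lt_iff.1 hx
  rw [max_lt_iff, eOne_lt_top_iff, eOne_lt_top_iff] at hu
  exact ⟨u, u - x, hu.1, hu.2, (sub_sub_cancel u x).symm⟩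

theorem splitLevel_preimage_Iic (c : ℝ≥0∞) :
    splitLevel E ⁻¹' Iic c = ⋂ c' ∈ Ioo c ⊤, EOne E ⁻¹' Iic c' - EOne E ⁻¹' Iic c' := by
  ext x
  simp only [mem_preimage, mem_Iic, mem_iInter₂, mem_Ioo, mem_preimage_Iic_sub_preimage_Iic_iff]
  constructor
  · rintro hx c' ⟨hc', -⟩
    obtain ⟨u, hu⟩ := iInf_lt_iff.1 (hx.trans_lt hc')
    exact ⟨u, hu.le⟩
  · refine fun h => le_of_forall_gt_imp_ge_of_dense fun c' hc' => ?_
    rcases eq_or_ne c' ⊤ with rfl | htop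
    · exact le_top
    · obtain ⟨u, hu⟩ := h c' ⟨hc', htop.lt_top⟩
      exact iInf_le_of_le u hu

end

section

variable {H : Type*} [NormedAddCommGroup H] [InnerProductSpace ℝ H] {E F G : H → ℝ≥0∞}

theorem IsConvexFunctional.add (hF : IsConvexFunctional F) (hG : IsConvexFunctional G) :
    IsConvexFunctional (F + G) := by
  intro x y a b ha hb hab
  calc F (a • x + b • y) + G (a • x + b • y)
      ≤ (ENNReal.ofReal a * F x + ENNReal.ofReal b * F y)
        + (ENNReal.ofReal a * G x + ENNReal.ofReal b * G y) :=
        add_le_add (hF x y a b ha hb hab) (hG x y a b ha hb hab)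
    _ = ENNReal.ofReal a * (F x + G x) + ENNReal.ofReal b * (F y + G y) := by ring

theorem ConvexOn.isConvexFunctional_ofReal {f : H → ℝ} (hf : ConvexOn ℝ univ f)
    (hf₀ : ∀ x, 0 ≤ f x) : IsConvexFunctional fun x => ENNReal.ofReal (f x) := by
  intro x y a b ha hb hab
  rw [← ENNReal.ofReal_mul ha, ← ENNReal.ofReal_mul hb,
    ← ENNReal.ofReal_add (mul_nonneg ha (hf₀ x)) (mul_nonneg hb (hf₀ y))]
  exact ENNReal.ofReal_le_ofReal (hf.2 (mem_univ x) (mem_univ y) ha hb hab)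

theorem IsConvexFunctional.eOne (hconv : IsConvexFunctional E) : IsConvexFunctional (EOne E) :=
  ((convexOn_univ_norm.pow (fun x _ => norm_nonneg x) 2).isConvexFunctional_ofReal
    fun x => sq_nonneg ‖x‖).add hconv

theorem IsConvexFunctional.convex_preimage_Iic (hF : IsConvexFunctional F) (c : ℝ≥0∞) :
    Convex ℝ (F ⁻¹' Iic c) := by
  intro u hu v hv a b ha hb hab
  calc F (a • u + b • v) ≤ ENNReal.ofReal a * F u + ENNReal.ofReal b * F v := hF u v a b ha hb hab
    _ ≤ ENNReal.ofReal a * c + ENNReal.ofReal b * c := by gcongr <;> assumption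
    _ = c := by rw [← add_mul, ← ENNReal.ofReal_add ha hb, hab, ENNReal.ofReal_one, one_mul]

theorem le_symE (hlsc : LowerSemicontinuous F) (hconv : IsConvexFunctional F)
    (hle : ∀ x, F x ≤ EOne E x) (hle_neg : ∀ x, F x ≤ EOne E (-x)) (u : H) :
    F u ≤ symE E u :=
  le_sSup ⟨F, hlsc, hconv, hle, hle_neg, rfl⟩

theorem symE_le_eOne (u : H) : symE E u ≤ EOne E u :=
  sSup_le fun _ ⟨_, _, _, hle, _, ht⟩ => ht ▸ hle u

theorem IsConvexFunctional.splitLevel (hconv : IsConvexFunctional E) :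
    IsConvexFunctional (splitLevel E) := by
  intro x y a b ha hb hab
  have hE₁ := hconv.eOne
  simp only [_root_.splitLevel, ENNReal.mul_iInf (by simp : ENNReal.ofReal a = ⊤ → _),
    ENNReal.mul_iInf (by simp : ENNReal.ofReal b = ⊤ → _), ENNReal.iInf_add, ENNReal.add_iInf]
  refine le_iInf₂ fun u₂ u₁ => iInf_le_of_le (a • u₁ + b • u₂) (max_le ?_ ?_)
  · calc EOne E (a • u₁ + b • u₂)
        ≤ ENNReal.ofReal a * EOne E u₁ + ENNReal.ofReal b * EOne E u₂ := hE₁ _ _ a b ha hb hab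
      _ ≤ _ := by gcongr <;> exact le_max_left _ _
  · calc EOne E (a • u₁ + b • u₂ - (a • x + b • y))
        = EOne E (a • (u₁ - x) + b • (u₂ - y)) := by congr 1; simp only [smul_sub]; abel
      _ ≤ ENNReal.ofReal a * EOne E (u₁ - x) + ENNReal.ofReal b * EOne E (u₂ - y) :=
        hE₁ _ _ a b ha hb hab
      _ ≤ _ := by gcongr <;> exact le_max_right _ _

variable [CompleteSpace H]

theorem isClosed_eOne_preimage_Iic_sub (hconv : IsConvexFunctional E)
    (hlsc : LowerSemicontinuous E) {c : ℝ≥0∞} (hc : c ≠ ⊤) :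
    IsClosed (EOne E ⁻¹' Iic c - EOne E ⁻¹' Iic c) :=
  have hconvex := hconv.eOne.convex_preimage_Iic c
  have hclosed := hlsc.eOne.isClosed_preimage c
  have hbdd := isBounded_eOne_preimage_Iic (E := E) hc
  hconvex.isClosed_sub hclosed hbdd hconvex hclosed hbdd

theorem LowerSemicontinuous.splitLevel (hconv : IsConvexFunctional E)
    (hlsc : LowerSemicontinuous E) : LowerSemicontinuous (splitLevel E) :=
  lowerSemicontinuous_iff_isClosed_preimage.2 fun c => by
    rw [splitLevel_preimage_Iic]
    exact isClosed_biInter fun c' hc' => isClosed_eOne_preimage_Iic_sub hconv hlsc hc'.2.ne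

end

variable {H : Type*} [NormedAddCommGroup H] [InnerProductSpace ℝ H] [CompleteSpace H]

/-- `span (dom E) = span (dom (sym E))`, and every `f ∈ dom (sym E)` is a difference of two
elements of `dom E`. -/
theorem span_dom_symE (E : H → ℝ≥0∞) (hconv : IsConvexFunctional E)
    (hlsc : LowerSemicontinuous E) (hzero : E 0 = 0) :
    Submodule.span ℝ {x : H | E x < ⊤} = Submodule.span ℝ {x : H | symE E x < ⊤} ∧
    ∀ f : H, symE E f < ⊤ → ∃ u v : H, E u < ⊤ ∧ E v < ⊤ ∧ f = u - v := by
  have hdecomp (f : H) (hf : symE E f < ⊤) : ∃ u v : H, E u < ⊤ ∧ E v < ⊤ ∧ f = u - v :=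
    exists_sub_of_splitLevel_lt_top <| (le_symE (hlsc.splitLevel hconv) hconv.splitLevel
      (splitLevel_le_eOne hzero) (splitLevel_le_eOne_neg hzero) f).trans_lt hf
  refine ⟨le_antisymm (Submodule.span_mono fun x hx => ?_) (Submodule.span_le.2 fun f hf => ?_),
    hdecomp⟩
  · exact (symE_le_eOne x).trans_lt (eOne_lt_top_iff.2 hx)
  · obtain ⟨u, v, hu, hv, rfl⟩ := hdecomp f hf
    exact sub_mem (Submodule.subset_span hu) (Submodule.subset_span hv)
end
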